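/- Let 𝒱 ⊂ ℝ³ be the set of the N = 12 vertices of the cuboctahedron: all vectors obtained as coordinate permutations of (±1,±1,0). Then max_{v ∈ 𝒱^N̲} |⟨v⟩|₂² = 4560. Consequently, for the unit-normalized ensemble 𝒱/√2 one has g = 4560/2 = 2280, and its minimum guesswork is (1/2)·(13 − √2280/12) ≈ 4.5104. -/

import Mathlib

open Pointwise

noncomputable section

abbrev E3 := EuclideanSpace ℝ (Fin 3)

/-- The vector `(a, b, c)` in ℝ³ with the Euclidean norm. -/
def vec3 (a b c : ℝ) : E3 := (WithLp.equiv 2 (Fin 3 → ℝ)).symm ![a, b, c]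

/-- `⟨v⟩ := Σ_{i=1}^N (2i − N + 1)·vᵢ` (here `i : Fin N` is 0-based, so the
coefficient reads `2(i+1) − N + 1 = 2i + 3 − N`). -/
def tupleAvg (N : ℕ) (v : Fin N → E3) : E3 :=
  ∑ i : Fin N, (2 * (i : ℝ) + 3 - N) • v i

/-- The set of values `|⟨v⟩|₂²` as `v` ranges over the `N`-tuples on `𝒱` without
repetition (i.e. bijective enumerations of `𝒱`). -/
def normSqSet (𝒱 : Set E3) (N : ℕ) : Set ℝ :=
  {x | ∃ v : Fin N → E3, Function.Injective v ∧ Set.range v = 𝒱 ∧ x = ‖tupleAvg N v‖ ^ 2}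

/-- All coordinate permutations of `(±1, ±1, 0)`. -/
def cuboctahedron : Set E3 :=
  {v | ∃ σ : Equiv.Perm (Fin 3), ∃ s : Fin 3 → ℝ, (∀ i, s i = 1 ∨ s i = -1) ∧
       v = (WithLp.equiv 2 (Fin 3 → ℝ)).symm (fun i => s i * ![1, 1, 0] (σ i))}

/-! ### Auxiliary material -/

namespace CuboAux

/-- A fixed enumeration of the 12 cuboctahedron vertices, in antipodal pairs. -/
def V : Fin 12 → E3 := ![vec3 1 1 0, vec3 (-1) (-1) 0, vec3 1 (-1) 0, vec3 (-1) 1 0,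
  vec3 1 0 1, vec3 (-1) 0 (-1), vec3 1 0 (-1), vec3 (-1) 0 1,
  vec3 0 1 1, vec3 0 (-1) (-1), vec3 0 1 (-1), vec3 0 (-1) 1]

lemma symm_eq (f : Fin 3 → ℝ) : (WithLp.equiv 2 (Fin 3 → ℝ)).symm f = vec3 (f 0) (f 1) (f 2) := by
  unfold vec3; congr 1; funext i; fin_cases i <;> rfl

lemma vec3_inj {a b c d e f : ℝ} : vec3 a b c = vec3 d e f ↔ a = d ∧ b = e ∧ c = f := by
  constructor
  · intro h
    exact ⟨congrArg (fun x : E3 => x 0) h, congrArg (fun x : E3 => x 1) h,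
      congrArg (fun x : E3 => x 2) h⟩
  · rintro ⟨rfl, rfl, rfl⟩; rfl

lemma perm_val (σ : Equiv.Perm (Fin 3)) (i : Fin 3) :
    ![(1:ℝ), 1, 0] (σ i) = if i = σ.symm 2 then 0 else 1 := by
  have h3 : ∀ j : Fin 3, j = 0 ∨ j = 1 ∨ j = 2 := by decide
  by_cases hiz : i = σ.symm 2
  · have h : σ i = 2 := by rw [hiz]; simp
    rw [h]; simp [hiz]
  · have hne : σ i ≠ 2 := fun h => hiz ((Equiv.eq_symm_apply σ).mpr h)
    rcases h3 (σ i) with h | h | h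
    · rw [h]; simp [hiz]
    · rw [h]; simp [hiz]
    · exact absurd h hne

lemma cubo_sub : cuboctahedron ⊆ Set.range V := by
  rintro x ⟨σ, s, hs, rfl⟩
  rw [symm_eq]
  simp only [perm_val]
  have h3 : ∀ j : Fin 3, j = 0 ∨ j = 1 ∨ j = 2 := by decide
  rcases h3 (σ.symm 2) with hz | hz | hz <;> rw [hz] <;>
    rcases hs 0 with h0 | h0 <;> rcases hs 1 with h1 | h1 <;> rcases hs 2 with h2 | h2 <;>
    rw [h0, h1, h2] <;>
    simp only [V, Matrix.range_cons, Matrix.range_empty, Set.union_empty, Set.mem_union,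
      Set.mem_singleton_iff, vec3_inj] <;>
    norm_num [Fin.ext_iff]

lemma mem12 (σ : Equiv.Perm (Fin 3)) (a b c : ℝ) {x : E3}
    (ha : a = 1 ∨ a = -1) (hb : b = 1 ∨ b = -1) (hc : c = 1 ∨ c = -1)
    (hx : x = vec3 (a * ![1,1,0] (σ 0)) (b * ![1,1,0] (σ 1)) (c * ![1,1,0] (σ 2))) :
    x ∈ cuboctahedron := by
  refine ⟨σ, ![a, b, c], ?_, ?_⟩
  · intro i; fin_cases i <;> assumption
  · rw [hx, symm_eq]; norm_num [Matrix.cons_val_two]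

lemma V_mem : ∀ k, V k ∈ cuboctahedron := by
  have o1 : (1:ℝ) = 1 ∨ (1:ℝ) = -1 := Or.inl rfl
  have o2 : (-1:ℝ) = 1 ∨ (-1:ℝ) = -1 := Or.inr rfl
  have s12 : ∀ i : Fin 3, (Equiv.swap (1:Fin 3) 2) i = ![0,2,1] i := by decide
  have s02 : ∀ i : Fin 3, (Equiv.swap (0:Fin 3) 2) i = ![2,1,0] i := by decide
  have sid : ∀ i : Fin 3, (1 : Equiv.Perm (Fin 3)) i = i := fun _ => rfl
  intro k
  fin_cases k
  · exact mem12 1 1 1 1 o1 o1 o1 (by norm_num [V, vec3_inj, sid, Matrix.cons_val_two])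
  · exact mem12 1 (-1) (-1) 1 o2 o2 o1 (by norm_num [V, vec3_inj, sid, Matrix.cons_val_two])
  · exact mem12 1 1 (-1) 1 o1 o2 o1 (by norm_num [V, vec3_inj, sid, Matrix.cons_val_two])
  · exact mem12 1 (-1) 1 1 o2 o1 o1 (by norm_num [V, vec3_inj, sid, Matrix.cons_val_two])
  · exact mem12 (Equiv.swap 1 2) 1 1 1 o1 o1 o1 (by norm_num [V, vec3_inj, s12, Matrix.cons_val_two])
  · exact mem12 (Equiv.swap 1 2) (-1) 1 (-1) o2 o1 o2 (by norm_num [V, vec3_inj, s12, Matrix.cons_val_two])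
  · exact mem12 (Equiv.swap 1 2) 1 1 (-1) o1 o1 o2 (by norm_num [V, vec3_inj, s12, Matrix.cons_val_two])
  · exact mem12 (Equiv.swap 1 2) (-1) 1 1 o2 o1 o1 (by norm_num [V, vec3_inj, s12, Matrix.cons_val_two])
  · exact mem12 (Equiv.swap 0 2) 1 1 1 o1 o1 o1 (by norm_num [V, vec3_inj, s02, Matrix.cons_val_two])
  · exact mem12 (Equiv.swap 0 2) 1 (-1) (-1) o1 o2 o2 (by norm_num [V, vec3_inj, s02, Matrix.cons_val_two])
  · exact mem12 (Equiv.swap 0 2) 1 1 (-1) o1 o1 o2 (by norm_num [V, vec3_inj, s02, Matrix.cons_val_two])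
  · exact mem12 (Equiv.swap 0 2) 1 (-1) 1 o1 o2 o1 (by norm_num [V, vec3_inj, s02, Matrix.cons_val_two])

lemma cubo_eq : cuboctahedron = Set.range V :=
  Set.eq_of_subset_of_subset cubo_sub (by rintro x ⟨k, rfl⟩; exact V_mem k)

def ψ : Fin 12 → ℤ := ![12,-12,6,-6,10,-10,8,-8,4,-4,2,-2]

lemma hφ : ∀ i, (V i) 0 * 9 + (V i) 1 * 3 + (V i) 2 = ((ψ i : ℤ) : ℝ) := by
  intro i; fin_cases i <;> norm_num [V, vec3, ψ, Matrix.cons_val_two]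

lemma V_inj : Function.Injective V := by
  intro a b h
  have h2 : ψ a = ψ b := by
    have h1 := congrArg (fun x : E3 => x 0 * 9 + x 1 * 3 + x 2) h
    simp only [hφ] at h1
    exact_mod_cast h1
  have hψ : ∀ a b : Fin 12, ψ a = ψ b → a = b := by decide
  exact hψ a b h2

lemma norm_sq (x : E3) : ‖x‖^2 = x 0^2 + x 1^2 + x 2^2 := by
  rw [EuclideanSpace.norm_eq, Real.sq_sqrt (by positivity)]
  simp [Fin.sum_univ_three, sq_abs]

/-! ### The arithmetic core -/

lemma one_le_sq_int {t : ℤ} (h : t ≠ 0) : 1 ≤ t^2 := by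
  have h1 := Int.one_le_abs h
  calc (1:ℤ) = 1^2 := by norm_num
  _ ≤ |t|^2 := pow_le_pow_left₀ (by norm_num) h1 2
  _ = t^2 := sq_abs t

lemma pair_sq {x y : ℝ} (hx : ∃ m:ℤ, x = 2*m+1) (hy : ∃ m:ℤ, y = 2*m+1) (h : x + y ≠ 0) :
    4 ≤ (x+y)^2 := by
  obtain ⟨a, rfl⟩ := hx
  obtain ⟨b, rfl⟩ := hy
  have h1 : (a + b + 1 : ℤ) ≠ 0 := by
    intro h0
    apply h
    have : ((a + b + 1 : ℤ) : ℝ) = 0 := by exact_mod_cast h0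
    push_cast at this
    linarith
  have h2 : (1:ℝ) ≤ ((a + b + 1 : ℤ):ℝ)^2 := by exact_mod_cast one_le_sq_int h1
  push_cast at h2
  nlinarith [h2]

set_option maxHeartbeats 2000000 in
lemma key (f0 f1 f2 f3 f4 f5 f6 f7 f8 f9 f10 f11 : ℝ)
    (h0 : ∃ m:ℤ, f0 = 2*m+1) (h1 : ∃ m:ℤ, f1 = 2*m+1) (h2 : ∃ m:ℤ, f2 = 2*m+1)
    (h3 : ∃ m:ℤ, f3 = 2*m+1) (h4 : ∃ m:ℤ, f4 = 2*m+1) (h5 : ∃ m:ℤ, f5 = 2*m+1)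
    (h6 : ∃ m:ℤ, f6 = 2*m+1) (h7 : ∃ m:ℤ, f7 = 2*m+1) (h8 : ∃ m:ℤ, f8 = 2*m+1)
    (h9 : ∃ m:ℤ, f9 = 2*m+1) (h10 : ∃ m:ℤ, f10 = 2*m+1) (h11 : ∃ m:ℤ, f11 = 2*m+1)
    (hsq : f0^2+f1^2+f2^2+f3^2+f4^2+f5^2+f6^2+f7^2+f8^2+f9^2+f10^2+f11^2 = 572) :
    (f0-f1+f2-f3+f4-f5+f6-f7)^2
    + (f0-f1-(f2-f3)+(f8-f9)+(f10-f11))^2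
    + ((f4-f5)-(f6-f7)+(f8-f9)-(f10-f11))^2 ≤ 4560 := by
  have iden : (f0-f1+f2-f3+f4-f5+f6-f7)^2
      + (f0-f1-(f2-f3)+(f8-f9)+(f10-f11))^2
      + ((f4-f5)-(f6-f7)+(f8-f9)-(f10-f11))^2
      + (4*((f0+f1)^2+(f2+f3)^2+(f4+f5)^2+(f6+f7)^2+(f8+f9)^2+(f10+f11)^2)
        + (((f0-f1)+(f2-f3)-(f4-f5)-(f6-f7))^2
          + ((f0-f1)-(f2-f3)-(f8-f9)-(f10-f11))^2
          + ((f4-f5)-(f6-f7)-(f8-f9)+(f10-f11))^2))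
      = 8*(f0^2+f1^2+f2^2+f3^2+f4^2+f5^2+f6^2+f7^2+f8^2+f9^2+f10^2+f11^2) := by ring
  have main : 16 ≤ 4*((f0+f1)^2+(f2+f3)^2+(f4+f5)^2+(f6+f7)^2+(f8+f9)^2+(f10+f11)^2)
      + (((f0-f1)+(f2-f3)-(f4-f5)-(f6-f7))^2
        + ((f0-f1)-(f2-f3)-(f8-f9)-(f10-f11))^2
        + ((f4-f5)-(f6-f7)-(f8-f9)+(f10-f11))^2) := by
    by_cases hall : f0+f1 = 0 ∧ f2+f3 = 0 ∧ f4+f5 = 0 ∧ f6+f7 = 0 ∧ f8+f9 = 0 ∧ f10+f11 = 0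
    · obtain ⟨e1, e2, e3, e4, e5, e6⟩ := hall
      obtain ⟨m0, rfl⟩ := h0; obtain ⟨m1, rfl⟩ := h1; obtain ⟨m2, rfl⟩ := h2
      obtain ⟨m3, rfl⟩ := h3; obtain ⟨m4, rfl⟩ := h4; obtain ⟨m5, rfl⟩ := h5
      obtain ⟨m6, rfl⟩ := h6; obtain ⟨m7, rfl⟩ := h7; obtain ⟨m8, rfl⟩ := h8
      obtain ⟨m9, rfl⟩ := h9; obtain ⟨m10, rfl⟩ := h10; obtain ⟨m11, rfl⟩ := h11
      have g1 : (m0+m1+1 : ℤ) = 0 := by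
        have hc : ((m0+m1+1 : ℤ) : ℝ) = 0 := by push_cast; linarith
        exact_mod_cast hc
      have g2 : (m2+m3+1 : ℤ) = 0 := by
        have hc : ((m2+m3+1 : ℤ) : ℝ) = 0 := by push_cast; linarith
        exact_mod_cast hc
      have g3 : (m4+m5+1 : ℤ) = 0 := by
        have hc : ((m4+m5+1 : ℤ) : ℝ) = 0 := by push_cast; linarith
        exact_mod_cast hc
      have g4 : (m6+m7+1 : ℤ) = 0 := by
        have hc : ((m6+m7+1 : ℤ) : ℝ) = 0 := by push_cast; linarith
        exact_mod_cast hc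
      have g5 : (m8+m9+1 : ℤ) = 0 := by
        have hc : ((m8+m9+1 : ℤ) : ℝ) = 0 := by push_cast; linarith
        exact_mod_cast hc
      have g6 : (m10+m11+1 : ℤ) = 0 := by
        have hc : ((m10+m11+1 : ℤ) : ℝ) = 0 := by push_cast; linarith
        exact_mod_cast hc
      have hT : (m0+m2-m4-m6 ≠ 0) ∨ (m0-m2-m8-m10-1 ≠ 0) ∨ (m4-m6-m8+m10 ≠ 0) := by omega
      have hTs : 1 ≤ (m0+m2-m4-m6)^2 + (m0-m2-m8-m10-1)^2 + (m4-m6-m8+m10)^2 := by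
        rcases hT with h | h | h
        · have := one_le_sq_int h
          have a1 := sq_nonneg (m0-m2-m8-m10-1); have a2 := sq_nonneg (m4-m6-m8+m10); linarith
        · have := one_le_sq_int h
          have a1 := sq_nonneg (m0+m2-m4-m6); have a2 := sq_nonneg (m4-m6-m8+m10); linarith
        · have := one_le_sq_int h
          have a1 := sq_nonneg (m0+m2-m4-m6); have a2 := sq_nonneg (m0-m2-m8-m10-1); linarith
      have hTr : (1:ℝ) ≤ ((m0+m2-m4-m6 : ℤ):ℝ)^2 + ((m0-m2-m8-m10-1 : ℤ):ℝ)^2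
          + ((m4-m6-m8+m10 : ℤ):ℝ)^2 := by exact_mod_cast hTs
      have k1 : (2*(m0:ℝ)+1-(2*(m1:ℝ)+1))+(2*(m2:ℝ)+1-(2*(m3:ℝ)+1))
          -(2*(m4:ℝ)+1-(2*(m5:ℝ)+1))-(2*(m6:ℝ)+1-(2*(m7:ℝ)+1))
          = 4*((m0+m2-m4-m6 : ℤ):ℝ) := by push_cast; linarith
      have k2 : (2*(m0:ℝ)+1-(2*(m1:ℝ)+1))-(2*(m2:ℝ)+1-(2*(m3:ℝ)+1))
          -(2*(m8:ℝ)+1-(2*(m9:ℝ)+1))-(2*(m10:ℝ)+1-(2*(m11:ℝ)+1))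
          = 4*((m0-m2-m8-m10-1 : ℤ):ℝ) := by push_cast; linarith
      have k3 : (2*(m4:ℝ)+1-(2*(m5:ℝ)+1))-(2*(m6:ℝ)+1-(2*(m7:ℝ)+1))
          -(2*(m8:ℝ)+1-(2*(m9:ℝ)+1))+(2*(m10:ℝ)+1-(2*(m11:ℝ)+1))
          = 4*((m4-m6-m8+m10 : ℤ):ℝ) := by push_cast; linarith
      rw [e1, e2, e3, e4, e5, e6, k1, k2, k3]
      nlinarith [hTr]
    · have hs4 : 4 ≤ (f0+f1)^2+(f2+f3)^2+(f4+f5)^2+(f6+f7)^2+(f8+f9)^2+(f10+f11)^2 := by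
        have n1 := sq_nonneg (f0+f1); have n2 := sq_nonneg (f2+f3)
        have n3 := sq_nonneg (f4+f5); have n4 := sq_nonneg (f6+f7)
        have n5 := sq_nonneg (f8+f9); have n6 := sq_nonneg (f10+f11)
        by_cases c1 : f0 + f1 = 0
        · by_cases c2 : f2+f3 = 0
          · by_cases c3 : f4+f5 = 0
            · by_cases c4 : f6+f7 = 0
              · by_cases c5 : f8+f9 = 0
                · have c6 : f10+f11 ≠ 0 := fun c6 => hall ⟨c1, c2, c3, c4, c5, c6⟩
                  have := pair_sq h10 h11 c6; linarith
                · have := pair_sq h8 h9 c5; linarith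
              · have := pair_sq h6 h7 c4; linarith
            · have := pair_sq h4 h5 c3; linarith
          · have := pair_sq h2 h3 c2; linarith
        · have := pair_sq h0 h1 c1; linarith
      have n7 := sq_nonneg ((f0-f1)+(f2-f3)-(f4-f5)-(f6-f7))
      have n8 := sq_nonneg ((f0-f1)-(f2-f3)-(f8-f9)-(f10-f11))
      have n9 := sq_nonneg ((f4-f5)-(f6-f7)-(f8-f9)+(f10-f11))
      linarith
  linarith [iden, main, hsq]

/-! ### Upper bound -/

set_option maxHeartbeats 1000000 in
lemma upper_bound : ∀ x ∈ normSqSet cuboctahedron 12, x ≤ 4560 := by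
  rintro x ⟨v, hinj, hrange, rfl⟩
  rw [cubo_eq] at hrange
  have hex : ∀ j, ∃ i, v i = V j := by
    intro j
    have : V j ∈ Set.range v := by rw [hrange]; exact Set.mem_range_self j
    exact this
  choose g hg using hex
  have ginj : Function.Injective g := by
    intro a b hab
    apply V_inj
    rw [← hg a, ← hg b, hab]
  have gbij : Function.Bijective g := Finite.injective_iff_bijective.mp ginj
  set π := Equiv.ofBijective g gbij with hπ
  have hgπ : ∀ j, v (π j) = V j := fun j => hg j
  set F : Fin 12 → ℝ := fun j => 2 * ((π j : Fin 12) : ℝ) - 11 with hF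
  have hv : tupleAvg 12 v = ∑ j, ((F j + 2) • V j) := by
    rw [tupleAvg]
    refine (Fintype.sum_equiv π _ _ ?_).symm
    intro j
    rw [hgπ j]
    have : F j + 2 = 2 * ((π j : Fin 12) : ℝ) + 3 - (12:ℕ) := by
      rw [hF]; push_cast; ring
    rw [this]
  have ht : ∀ k, tupleAvg 12 v k = ∑ j, (F j + 2) * V j k := by
    intro k
    rw [hv, WithLp.ofLp_sum, Finset.sum_apply k Finset.univ _]
    apply Finset.sum_congr rfl
    intro j _
    rfl
  have f3 : (Fin.succ 2 : Fin 12) = 3 := rfl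
  have f4 : ((Fin.succ 2).succ : Fin 12) = 4 := rfl
  have f5 : ((Fin.succ 2).succ.succ : Fin 12) = 5 := rfl
  have f6 : ((Fin.succ 2).succ.succ.succ : Fin 12) = 6 := rfl
  have f7 : ((Fin.succ 2).succ.succ.succ.succ : Fin 12) = 7 := rfl
  have f8 : ((Fin.succ 2).succ.succ.succ.succ.succ : Fin 12) = 8 := rfl
  have f9 : ((Fin.succ 2).succ.succ.succ.succ.succ.succ : Fin 12) = 9 := rfl
  have f10 : ((Fin.succ 2).succ.succ.succ.succ.succ.succ.succ : Fin 12) = 10 := rfl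
  have f11 : ((Fin.succ 2).succ.succ.succ.succ.succ.succ.succ.succ : Fin 12) = 11 := rfl
  have ht0 : tupleAvg 12 v 0 = F 0 - F 1 + F 2 - F 3 + F 4 - F 5 + F 6 - F 7 := by
    rw [ht 0]
    simp [Fin.sum_univ_succ, V, vec3, f3, f4, f5, f6, f7, f8, f9, f10, f11]
    ring
  have ht1 : tupleAvg 12 v 1 = F 0 - F 1 - (F 2 - F 3) + (F 8 - F 9) + (F 10 - F 11) := by
    rw [ht 1]
    simp [Fin.sum_univ_succ, V, vec3, f3, f4, f5, f6, f7, f8, f9, f10, f11]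
    ring
  have ht2 : tupleAvg 12 v 2 = (F 4 - F 5) - (F 6 - F 7) + (F 8 - F 9) - (F 10 - F 11) := by
    rw [ht 2]
    simp [Fin.sum_univ_succ, V, vec3, f3, f4, f5, f6, f7, f8, f9, f10, f11]
    ring
  have hsq : F 0^2+F 1^2+F 2^2+F 3^2+F 4^2+F 5^2+F 6^2+F 7^2+F 8^2+F 9^2+F 10^2+F 11^2
      = 572 := by
    have he : ∑ j, (2 * ((π j : Fin 12) : ℝ) - 11)^2 = ∑ i : Fin 12, (2 * (i : ℝ) - 11)^2 :=
      Equiv.sum_comp π (fun i => (2 * (i : ℝ) - 11)^2)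
    have h2 : ∑ i : Fin 12, (2 * (i : ℝ) - 11)^2 = 572 := by
      simp [Fin.sum_univ_succ, f3, f4, f5, f6, f7, f8, f9, f10, f11]
      norm_num
    rw [show (572:ℝ) = ∑ i : Fin 12, (2 * (i : ℝ) - 11)^2 from h2.symm, ← he]
    simp [Fin.sum_univ_succ, hF, f3, f4, f5, f6, f7, f8, f9, f10, f11]
    ring
  have hodd : ∀ j : Fin 12, ∃ m : ℤ, F j = 2*m+1 := by
    intro j
    refine ⟨((π j : Fin 12) : ℤ) - 6, ?_⟩
    rw [hF]
    push_cast
    ring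
  rw [norm_sq, ht0, ht1, ht2]
  exact key (F 0) (F 1) (F 2) (F 3) (F 4) (F 5) (F 6) (F 7) (F 8) (F 9) (F 10) (F 11)
    (hodd 0) (hodd 1) (hodd 2) (hodd 3) (hodd 4) (hodd 5) (hodd 6) (hodd 7) (hodd 8)
    (hodd 9) (hodd 10) (hodd 11) hsq

/-! ### Attainment -/

lemma Vtab0 : V 0 = vec3 1 1 0 := rfl
lemma Vtab1 : V 1 = vec3 (-1) (-1) 0 := rfl
lemma Vtab2 : V 2 = vec3 1 (-1) 0 := rfl
lemma Vtab3 : V 3 = vec3 (-1) 1 0 := rfl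
lemma Vtab4 : V 4 = vec3 1 0 1 := rfl
lemma Vtab5 : V 5 = vec3 (-1) 0 (-1) := rfl
lemma Vtab6 : V 6 = vec3 1 0 (-1) := rfl
lemma Vtab7 : V 7 = vec3 (-1) 0 1 := rfl
lemma Vtab8 : V 8 = vec3 0 1 1 := rfl
lemma Vtab9 : V 9 = vec3 0 (-1) (-1) := rfl
lemma Vtab10 : V 10 = vec3 0 1 (-1) := rfl
lemma Vtab11 : V 11 = vec3 0 (-1) 1 := rfl

lemma vec3_app0 (a b c : ℝ) : (vec3 a b c) 0 = a := by simp [vec3]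
lemma vec3_app1 (a b c : ℝ) : (vec3 a b c) 1 = b := by simp [vec3]
lemma vec3_app2 (a b c : ℝ) : (vec3 a b c) 2 = c := by simp [vec3]

def μopt : Fin 12 → Fin 12 := ![0, 4, 6, 2, 8, 10, 11, 9, 3, 7, 5, 1]
def vopt : Fin 12 → E3 := fun i => V (μopt i)
lemma μopt_inj : Function.Injective μopt := by decide
lemma μopt_surj : Function.Surjective μopt := by decide
lemma vopt_inj : Function.Injective vopt := V_inj.comp μopt_inj
lemma vopt_range : Set.range vopt = Set.range V := Function.Surjective.range_comp μopt_surj V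

lemma vopt_val : ‖tupleAvg 12 vopt‖^2 = 4560 := by
  have h0 : tupleAvg 12 vopt 0 = -64 := by
    rw [tupleAvg, WithLp.ofLp_sum, Finset.sum_apply]
    simp only [Fin.sum_univ_succ, Finset.univ_eq_empty, Finset.sum_empty, PiLp.smul_apply,
      smul_eq_mul, vopt, μopt]
    norm_num [Vtab0, Vtab1, Vtab2, Vtab3, Vtab4, Vtab5, Vtab6, Vtab7, Vtab8, Vtab9,
      Vtab10, Vtab11, vec3_app0, vec3_app1, vec3_app2, Matrix.cons_val_two]
  have h1 : tupleAvg 12 vopt 1 = -20 := by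
    rw [tupleAvg, WithLp.ofLp_sum, Finset.sum_apply]
    simp only [Fin.sum_univ_succ, Finset.univ_eq_empty, Finset.sum_empty, PiLp.smul_apply,
      smul_eq_mul, vopt, μopt]
    norm_num [Vtab0, Vtab1, Vtab2, Vtab3, Vtab4, Vtab5, Vtab6, Vtab7, Vtab8, Vtab9,
      Vtab10, Vtab11, vec3_app0, vec3_app1, vec3_app2, Matrix.cons_val_two]
  have h2 : tupleAvg 12 vopt 2 = -8 := by
    rw [tupleAvg, WithLp.ofLp_sum, Finset.sum_apply]
    simp only [Fin.sum_univ_succ, Finset.univ_eq_empty, Finset.sum_empty, PiLp.smul_apply,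
      smul_eq_mul, vopt, μopt]
    norm_num [Vtab0, Vtab1, Vtab2, Vtab3, Vtab4, Vtab5, Vtab6, Vtab7, Vtab8, Vtab9,
      Vtab10, Vtab11, vec3_app0, vec3_app1, vec3_app2, Matrix.cons_val_two]
  rw [norm_sq, h0, h1, h2]
  norm_num

/-! ### Scaling -/

lemma mem_smul_normSq {a : ℝ} (ha : a ≠ 0) {S : Set E3} {y : ℝ} (hy : y ∈ normSqSet S 12) :
    a^2 * y ∈ normSqSet (a • S) 12 := by
  obtain ⟨v, hinj, hrange, rfl⟩ := hy
  refine ⟨fun i => a • v i, ?_, ?_, ?_⟩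
  · intro i j hij
    exact hinj (smul_right_injective E3 ha hij)
  · rw [← Set.smul_set_range a v, hrange]
  · have hta : tupleAvg 12 (fun i => a • v i) = a • tupleAvg 12 v := by
      rw [tupleAvg, tupleAvg, Finset.smul_sum]
      apply Finset.sum_congr rfl
      intro i _
      rw [smul_comm]
    rw [hta, norm_smul]
    rw [mul_pow, Real.norm_eq_abs, sq_abs]

lemma IsGreatest_smul {a : ℝ} (ha : 0 < a) {S : Set E3} {y : ℝ}
    (h : IsGreatest (normSqSet S 12) y) :
    IsGreatest (normSqSet (a • S) 12) (a^2 * y) := by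
  constructor
  · exact mem_smul_normSq (ne_of_gt ha) h.1
  · intro x hx
    have h1 : (a⁻¹)^2 * x ∈ normSqSet (a⁻¹ • a • S) 12 :=
      mem_smul_normSq (inv_ne_zero (ne_of_gt ha)) hx
    rw [inv_smul_smul₀ (ne_of_gt ha)] at h1
    have h2 := h.2 h1
    have ha2 : 0 < a^2 := by positivity
    rw [inv_pow] at h2
    calc x = a^2 * ((a^2)⁻¹ * x) := by field_simp
    _ ≤ a^2 * y := by
        apply mul_le_mul_of_nonneg_left h2 (le_of_lt ha2)

end CuboAux

theorem cuboctahedron_guesswork :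
    IsGreatest (normSqSet cuboctahedron 12) 4560 ∧
    IsGreatest (normSqSet ((Real.sqrt 2)⁻¹ • cuboctahedron) 12) (4560 / 2) ∧
    |(1 / 2 : ℝ) * (12 + 1 - Real.sqrt (4560 / 2) / 12) - 4.5104| < 0.0001 := by
  have hmain : IsGreatest (normSqSet cuboctahedron 12) 4560 := by
    constructor
    · exact ⟨CuboAux.vopt, CuboAux.vopt_inj,
        CuboAux.vopt_range.trans CuboAux.cubo_eq.symm, CuboAux.vopt_val.symm⟩
    · exact CuboAux.upper_bound
  refine ⟨hmain, ?_, ?_⟩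
  · have hs2 : (0:ℝ) < (Real.sqrt 2)⁻¹ := by
      have : (0:ℝ) < Real.sqrt 2 := Real.sqrt_pos.mpr (by norm_num)
      positivity
    have := CuboAux.IsGreatest_smul hs2 hmain
    have heq : ((Real.sqrt 2)⁻¹)^2 * 4560 = 4560 / 2 := by
      rw [inv_pow, Real.sq_sqrt (by norm_num : (0:ℝ) ≤ 2)]
      norm_num
    rwa [heq] at this
  · have h2280 : (4560:ℝ)/2 = 2280 := by norm_num
    rw [h2280]
    have hl : (47.749:ℝ) ≤ Real.sqrt 2280 := by
      have : (47.749:ℝ) = Real.sqrt (47.749^2) := (Real.sqrt_sq (by norm_num)).symm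
      rw [this]
      apply Real.sqrt_le_sqrt
      norm_num
    have hu : Real.sqrt 2280 ≤ 47.75 := by
      have : (47.75:ℝ) = Real.sqrt (47.75^2) := (Real.sqrt_sq (by norm_num)).symm
      rw [this]
      apply Real.sqrt_le_sqrt
      norm_num
    rw [abs_lt]
    constructor <;> nlinarith [hl, hu]
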